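/- arXiv:2605.24673 — 2 statements merged into one kernel-verified Lean document; each statement's English description precedes it below -/
import Mathlib

section
/- Let F be the oriented edge-incidence matrix of any connected, unweighted (all edge weights equal to 1) undirected graph G = (V, E) on n nodes. Then every entry of the Moore–Penrose pseudoinverse F† has absolute value at most 1, i.e., ‖F†‖_max ≤ 1. -/
open MeasureTheory ProbabilityTheory Filter Matrix
open scoped ENNReal NNReal BigOperators

noncomputable section

/-- Euclidean distance between two vectors in `ℝ^p`. -/
def dist2 {p : ℕ} (a b : Fin p → ℝ) : ℝ := Real.sqrt (∑ l, (a l - b l) ^ 2)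

/-- `E : Ω → ℝ^{n×p}` has independent, mean-zero rows whose sub-Gaussian norm
`‖E_i‖_{ψ₂} = sup_{‖v‖=1} inf {K > 0 : 𝔼 exp((vᵀE_i)²/K²) ≤ 2}` is at most `σ`. -/
def HasIndepSubGaussianRows {Ω : Type} [MeasurableSpace Ω] (μ : Measure Ω)
    {n p : ℕ} (E : Ω → Matrix (Fin n) (Fin p) ℝ) (σ : ℝ) : Prop :=
  iIndepFun
      (fun (i : Fin n) ω => E ω i) μ ∧
  (∀ i l, ∫ ω, E ω i l ∂μ = 0) ∧
  (∀ i, ∀ v : Fin p → ℝ, ∑ l, (v l) ^ 2 = 1 → ∀ K : ℝ, σ < K →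
    ∫ ω, Real.exp ((∑ l, v l * E ω i l) ^ 2 / K ^ 2) ∂μ ≤ 2)

/-- Index type for the potential edges `{(j,k) : j < k}` of a graph on `Fin n`. -/
abbrev EdgeIdx (n : ℕ) := {e : Fin n × Fin n // e.1 < e.2}

/-- Oriented edge-incidence matrix of the affinity matrix `Φ`: the column indexed by a
pair `(j,k)` with `j < k` has entry `√Φ_jk` in row `j`, `-√Φ_jk` in row `k` and zeros
elsewhere (pairs that are not edges contribute zero columns). -/
def incidence {n : ℕ} (Φ : Matrix (Fin n) (Fin n) ℝ) : Matrix (Fin n) (EdgeIdx n) ℝ :=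
  Matrix.of fun i e =>
    if i = e.val.1 then Real.sqrt (Φ e.val.1 e.val.2)
    else if i = e.val.2 then -Real.sqrt (Φ e.val.1 e.val.2) else 0

/-- The four Penrose conditions: `B` is the Moore–Penrose pseudoinverse of `A`. -/
def IsPInv {m n : Type} [Fintype m] [Fintype n]
    (A : Matrix m n ℝ) (B : Matrix n m ℝ) : Prop :=
  A * B * A = A ∧ B * A * B = B ∧ (A * B)ᵀ = A * B ∧ (B * A)ᵀ = B * A

/-- Maximal absolute entry `‖M‖_max` of a matrix. -/
def maxEntry {m n : Type} [Fintype m] [Fintype n] (M : Matrix m n ℝ) : ℝ :=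
  ⨆ i, ⨆ j, |M i j|

/-- The graph whose edges are the pairs with strictly positive affinity. -/
def graphOf {n : ℕ} (Φ : Matrix (Fin n) (Fin n) ℝ) : SimpleGraph (Fin n) :=
  SimpleGraph.fromRel fun i j => 0 < Φ i j

/-- A valid affinity matrix: symmetric, nonnegative entries, zero diagonal, connected. -/
def IsValidAffinity {n : ℕ} (Φ : Matrix (Fin n) (Fin n) ℝ) : Prop :=
  Φᵀ = Φ ∧ (∀ i j, 0 ≤ Φ i j) ∧ (∀ i, Φ i i = 0) ∧ (graphOf Φ).Connected

/-- The convex clustering penalty `Σ_{i<j} √Φ_ij ‖U_{i·} - U_{j·}‖₂`. -/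
def penaltySum {n p : ℕ} (Φ : Matrix (Fin n) (Fin n) ℝ)
    (U : Matrix (Fin n) (Fin p) ℝ) : ℝ :=
  ∑ e : EdgeIdx n, Real.sqrt (Φ e.val.1 e.val.2) * dist2 (U e.val.1) (U e.val.2)

/-- The convex clustering objective
`U ↦ γ Σ_{i<j} √Φ_ij ‖U_{i·} - U_{j·}‖₂ + (1/2) ‖U - X‖_F²`. -/
def ccObj {n p : ℕ} (γ : ℝ) (Φ : Matrix (Fin n) (Fin n) ℝ)
    (X U : Matrix (Fin n) (Fin p) ℝ) : ℝ :=
  γ * penaltySum Φ U + (1 / 2) * ∑ i, ∑ l, (U i l - X i l) ^ 2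

/-- Diameter `max_{a,b ∈ C} ‖a - b‖₂` of a finite set of centers. -/
def diamC {p : ℕ} (C : Finset (Fin p → ℝ)) : ℝ :=
  ⨆ a : C, ⨆ b : C, dist2 a.val b.val

/-- Graph Laplacian `L = D - Φ`. -/
def lap {n : ℕ} (Φ : Matrix (Fin n) (Fin n) ℝ) : Matrix (Fin n) (Fin n) ℝ :=
  Matrix.diagonal (fun i => ∑ j, Φ i j) - Φ

/-- Two-cluster membership (clusters `{0,…,n/2-1}` and `{n/2,…,n-1}`). -/
def sameCluster {n : ℕ} (i j : Fin n) : Prop := ((i : ℕ) < n / 2 ↔ (j : ℕ) < n / 2)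

instance {n : ℕ} (i j : Fin n) : Decidable (sameCluster i j) := by
  unfold sameCluster; infer_instance

/-- `Φ` is the adjacency matrix of the two-cluster stochastic block model with
within-cluster probability `pw` and between-cluster probability `pb`. -/
def IsSBM {Ω : Type} [MeasurableSpace Ω] (μ : Measure Ω) {n : ℕ}
    (Φ : Ω → Matrix (Fin n) (Fin n) ℝ) (pw pb : ℝ) : Prop :=
  (∀ ω, (Φ ω)ᵀ = Φ ω) ∧ (∀ ω i, Φ ω i i = 0) ∧
  (∀ ω i j, Φ ω i j = 0 ∨ Φ ω i j = 1) ∧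
  iIndepFun
    (fun (e : EdgeIdx n) ω => Φ ω e.val.1 e.val.2) μ ∧
  (∀ e : EdgeIdx n, μ {ω | Φ ω e.val.1 e.val.2 = 1} =
      ENNReal.ofReal (if sameCluster e.val.1 e.val.2 then pw else pb))

/-- The matrix whose first `n/2` rows equal `c₁` and remaining rows equal `c₂`. -/
def twoClusterU (n : ℕ) {p : ℕ} (c₁ c₂ : Fin p → ℝ) : Matrix (Fin n) (Fin p) ℝ :=
  Matrix.of fun i l => if (i : ℕ) < n / 2 then c₁ l else c₂ l

/-- `Σ_{(i,j) ∈ E} Φ_ij ‖U_{i·} - U_{j·}‖₂` (for a 0/1 matrix `Φ`, the sum of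
`‖U_{i·} - U_{j·}‖₂` over the edges `i < j` with `Φ_ij = 1`). -/
def cutSum {n p : ℕ} (Φv : Matrix (Fin n) (Fin n) ℝ)
    (U : Matrix (Fin n) (Fin p) ℝ) : ℝ :=
  ∑ e : EdgeIdx n, Φv e.val.1 e.val.2 * dist2 (U e.val.1) (U e.val.2)

/-- Adjacency matrix of the advantageous two-clique graph `G(n,k)`: two cliques on
`{0,…,n/2-1}` and `{n/2,…,n-1}` together with the `k` bridges `{i, i+n/2}`, `i < k`. -/
def advPhi (n k : ℕ) : Matrix (Fin n) (Fin n) ℝ :=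
  Matrix.of fun i j =>
    if i ≠ j ∧ (((i : ℕ) < n / 2 ∧ (j : ℕ) < n / 2) ∨
        (n / 2 ≤ (i : ℕ) ∧ n / 2 ≤ (j : ℕ)) ∨
        ((j : ℕ) = (i : ℕ) + n / 2 ∧ (i : ℕ) < k) ∨
        ((i : ℕ) = (j : ℕ) + n / 2 ∧ (j : ℕ) < k))
    then 1 else 0

/-- The `n×n` matrix `(1/n) 1_n 1_nᵀ`. -/
def onesProj (n : ℕ) : Matrix (Fin n) (Fin n) ℝ :=
  Matrix.of fun _ _ => (1 : ℝ) / n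

/-- Expected adjacency matrix `B ⊗ J - p_w I_n` of the two-cluster stochastic block
model (clusters being the first and last `n/2` indices). -/
def sbmExpected (n : ℕ) (pw pb : ℝ) : Matrix (Fin n) (Fin n) ℝ :=
  Matrix.of fun i j =>
    (if ((i : ℕ) < n / 2 ↔ (j : ℕ) < n / 2) then pw else pb) -
      (if i = j then pw else 0)

end

/-!
Write `F` for the incidence matrix, `B = F†`, and note that `F Fᵀ` is the graph Laplacian `L`.
A zero column of `F` (a non-edge) gives a zero row of `B`. For an edge `e = (j,k)` the row
`w = B_e` solves `L w = 𝟙_j - 𝟙_k`, because `F Fᵀ Bᵀ = F`, and sums to zero, because `B 𝟙 = 0`.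
By the discrete maximum principle `w` is largest at `j` and smallest at `k`, so
`|w_i| ≤ w_j - w_k = (B F)_{ee}`, a diagonal entry of the orthogonal projection `B F`, hence `≤ 1`.
-/

open Finset SimpleGraph

theorem Matrix.diag_mem_Icc_of_isSymm_of_isIdempotentElem {ι : Type*} [Fintype ι]
    {P : Matrix ι ι ℝ} (hsymm : P.IsSymm) (hidem : IsIdempotentElem P) (e : ι) :
    P e e ∈ Set.Icc 0 1 := by
  have hsq : P e e = ∑ f, P e f ^ 2 := by
    conv_lhs => rw [← hidem.eq]
    rw [mul_apply]
    refine sum_congr rfl fun f _ => ?_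
    rw [sq, ← hsymm.apply e f]
  have hle : P e e ^ 2 ≤ P e e :=
    calc P e e ^ 2 ≤ ∑ f, P e f ^ 2 := single_le_sum (fun f _ => sq_nonneg (P e f)) (mem_univ e)
      _ = P e e := hsq.symm
  have hnonneg : 0 ≤ P e e := hsq ▸ sum_nonneg fun f _ => sq_nonneg _
  exact ⟨hnonneg, by nlinarith⟩

namespace IsPInv

variable {m n : Type} [Fintype m] [Fintype n] {A : Matrix m n ℝ} {B : Matrix n m ℝ}

theorem mul_transpose_mul_transpose (h : IsPInv A B) : A * Aᵀ * Bᵀ = A := by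
  rw [Matrix.mul_assoc, ← transpose_mul, h.2.2.2, ← Matrix.mul_assoc, h.1]

theorem eq_transpose_mul_transpose_mul (h : IsPInv A B) : B = Aᵀ * Bᵀ * B := by
  rw [← transpose_mul, h.2.2.2, h.2.1]

theorem eq_mul_transpose_mul_transpose (h : IsPInv A B) : B = B * Bᵀ * Aᵀ := by
  rw [Matrix.mul_assoc, ← transpose_mul, h.2.2.1, ← Matrix.mul_assoc, h.2.1]

theorem mulVec_eq_zero_of_transpose_mulVec_eq_zero (h : IsPInv A B) {v : m → ℝ}
    (hv : Aᵀ *ᵥ v = 0) : B *ᵥ v = 0 := by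
  rw [h.eq_mul_transpose_mul_transpose, ← mulVec_mulVec, hv, mulVec_zero]

theorem apply_eq_zero_of_forall_apply_eq_zero (h : IsPInv A B) {e : n}
    (he : ∀ a, A a e = 0) (i : m) : B e i = 0 := by
  rw [h.eq_transpose_mul_transpose_mul, Matrix.mul_assoc, mul_apply]
  simp [he]

theorem mul_apply_self_mem_Icc (h : IsPInv A B) (e : n) : (B * A) e e ∈ Set.Icc 0 1 :=
  diag_mem_Icc_of_isSymm_of_isIdempotentElem h.2.2.2
    (by rw [IsIdempotentElem, ← Matrix.mul_assoc, h.2.1]) e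

end IsPInv

theorem sum_edgeIdx_eq_sum_sum {n : ℕ} {M : Type*} [AddCommMonoid M] (g : Fin n → Fin n → M) :
    ∑ e : EdgeIdx n, g e.1.1 e.1.2 = ∑ a, ∑ b, if a < b then g a b else 0 := by
  rw [← sum_subtype (univ.filter fun e : Fin n × Fin n => e.1 < e.2) (by simp)
    (fun e => g e.1 e.2), sum_filter, Fintype.sum_prod_type]

theorem two_nsmul_sum_edgeIdx {n : ℕ} {M : Type*} [AddCommMonoid M] {h : Fin n → Fin n → M}
    (hsymm : ∀ a b, h a b = h b a) (hdiag : ∀ a, h a a = 0) :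
    2 • ∑ e : EdgeIdx n, h e.1.1 e.1.2 = ∑ a, ∑ b, h a b := by
  have hswap : ∑ e : EdgeIdx n, h e.1.1 e.1.2 = ∑ a, ∑ b, if b < a then h a b else 0 :=
    calc ∑ e : EdgeIdx n, h e.1.1 e.1.2 = ∑ e : EdgeIdx n, h e.1.2 e.1.1 :=
          sum_congr rfl fun e _ => hsymm _ _
      _ = ∑ a, ∑ b, if a < b then h b a else 0 := sum_edgeIdx_eq_sum_sum fun a b => h b a
      _ = _ := sum_comm
  rw [two_nsmul]
  nth_rewrite 1 [sum_edgeIdx_eq_sum_sum]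
  rw [hswap, ← sum_add_distrib]
  refine sum_congr rfl fun a _ => ?_
  rw [← sum_add_distrib]
  refine sum_congr rfl fun b _ => ?_
  rcases lt_trichotomy a b with hab | rfl | hab
  · simp [hab, hab.not_gt]
  · simp [hdiag]
  · simp [hab, hab.not_gt]

theorem SimpleGraph.two_mul_lapMatrix_apply {V : Type*} [Fintype V] [DecidableEq V]
    (G : SimpleGraph V) [DecidableRel G.Adj] (x y : V) :
    2 * G.lapMatrix ℝ x y = ∑ a, ∑ b, if G.Adj a b then
      ((if x = a then 1 else 0) - (if x = b then 1 else 0)) *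
        ((if y = a then 1 else 0) - (if y = b then 1 else 0)) else 0 := by
  have hterm : ∀ a b, (if G.Adj a b then
      ((if x = a then 1 else 0) - (if x = b then 1 else 0)) *
        ((if y = a then 1 else 0) - (if y = b then 1 else 0)) else 0) =
      (if x = a then (if y = a then G.adjMatrix ℝ a b else 0) else 0)
      - (if x = a then (if y = b then G.adjMatrix ℝ a b else 0) else 0)
      - (if y = a then (if x = b then G.adjMatrix ℝ a b else 0) else 0)
      + (if x = b then (if y = b then G.adjMatrix ℝ a b else 0) else 0) := by
    intro a b
    simp only [adjMatrix_apply]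
    split_ifs <;> ring
  simp only [hterm, sum_add_distrib, sum_sub_distrib, sum_ite_eq, mem_univ, if_true,
    sum_ite_irrel, sum_const_zero]
  have hsymm : ∀ a b, G.adjMatrix ℝ a b = G.adjMatrix ℝ b a := fun a b =>
    G.isSymm_adjMatrix.apply b a
  rw [hsymm y x]
  simp_rw [hsymm _ x, adjMatrix_apply, ← degree_eq_sum_if_adj]
  rcases eq_or_ne x y with rfl | hxy
  · simp [lapMatrix, degMatrix]
    ring
  · simp [lapMatrix, degMatrix, hxy, hxy.symm]
    split_ifs <;> ring

theorem SimpleGraph.Preconnected.le_of_lapMatrix_mulVec_nonpos {V : Type*} [Fintype V]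
    [DecidableEq V] {G : SimpleGraph V} [DecidableRel G.Adj] (hG : G.Preconnected)
    {f : V → ℝ} {j : V} (hf : ∀ x ≠ j, (G.lapMatrix ℝ *ᵥ f) x ≤ 0) (i : V) : f i ≤ f j := by
  by_contra! hji
  obtain ⟨x₀, -, hx₀⟩ := exists_max_image univ f ⟨i, mem_univ i⟩
  obtain ⟨d, -, hmax, hnotmax⟩ := (hG x₀ j).some.exists_boundary_dart {x | ∀ a, f a ≤ f x}
    (fun a => hx₀ a (mem_univ a)) (fun h => (h i).not_gt hji)
  simp only [Set.mem_ofPred_eq, not_forall, not_le] at hmax hnotmax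
  obtain ⟨a, ha⟩ := hnotmax
  have hpos : 0 < (G.lapMatrix ℝ *ᵥ f) d.fst := by
    rw [lapMatrix_mulVec_apply, ← card_neighborFinset_eq_degree, ← nsmul_eq_mul, ← sum_const,
      ← sum_sub_distrib]
    exact sum_pos' (fun u _ => sub_nonneg.2 (hmax u))
      ⟨d.snd, (G.mem_neighborFinset _ _).2 d.adj, sub_pos.2 (ha.trans_le (hmax a))⟩
  exact (hf _ (by rintro rfl; exact (hmax i).not_gt hji)).not_gt hpos

theorem transpose_incidence_mulVec_one {n : ℕ} (Φ : Matrix (Fin n) (Fin n) ℝ) :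
    (incidence Φ)ᵀ *ᵥ 1 = 0 := by
  ext e
  have hne : e.1.1 ≠ e.1.2 := e.2.ne
  have hsplit : ∀ a, incidence Φ a e = (if a = e.1.1 then √(Φ e.1.1 e.1.2) else 0) +
      (if a = e.1.2 then -√(Φ e.1.1 e.1.2) else 0) := by
    intro a
    simp only [incidence, of_apply]
    split_ifs <;> simp_all
  simp [mulVec, dotProduct, hsplit, sum_add_distrib]

section incidence

variable {n : ℕ} {G : SimpleGraph (Fin n)} [DecidableRel G.Adj]

theorem incidence_adjMatrix_apply (a : Fin n) (e : EdgeIdx n) :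
    incidence (G.adjMatrix ℝ) a e = if G.Adj e.1.1 e.1.2 then
      (if a = e.1.1 then 1 else 0) - (if a = e.1.2 then 1 else 0) else 0 := by
  have hne : e.1.1 ≠ e.1.2 := e.2.ne
  by_cases h : G.Adj e.1.1 e.1.2 <;> by_cases h1 : a = e.1.1 <;> by_cases h2 : a = e.1.2 <;>
    simp_all [incidence]

theorem incidence_adjMatrix_mul_transpose :
    incidence (G.adjMatrix ℝ) * (incidence (G.adjMatrix ℝ))ᵀ = G.lapMatrix ℝ := by
  ext x y
  have key := two_nsmul_sum_edgeIdx (M := ℝ)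
    (h := fun a b => if G.Adj a b then
      ((if x = a then 1 else 0) - (if x = b then 1 else 0)) *
        ((if y = a then 1 else 0) - (if y = b then 1 else 0)) else 0)
    (fun a b => by simp only [G.adj_comm a b]; split_ifs <;> ring) (by simp)
  rw [← G.two_mul_lapMatrix_apply, two_nsmul, ← two_mul] at key
  rw [← mul_left_cancel₀ two_ne_zero key, mul_apply]
  refine sum_congr rfl fun e _ => ?_
  simp only [transpose_apply, incidence_adjMatrix_apply]
  split_ifs <;> ring

end incidence

theorem abs_le_sub_of_sum_eq_zero {ι : Type*} [Fintype ι] {f : ι → ℝ} (hf : ∑ a, f a = 0)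
    {j k : ι} (hj : ∀ a, f a ≤ f j) (hk : ∀ a, f k ≤ f a) (i : ι) : |f i| ≤ f j - f k := by
  have hne : (univ : Finset ι).Nonempty := ⟨i, mem_univ i⟩
  obtain ⟨a, -, ha⟩ := exists_le_of_sum_le hne (f := f) (g := fun _ => 0) (by simp [hf])
  obtain ⟨b, -, hb⟩ := exists_le_of_sum_le hne (f := fun _ => 0) (g := f) (by simp [hf])
  rw [abs_le]
  constructor <;> linarith [hj i, hk i, hk a, hj b]

theorem abs_apply_le_one_of_isPInv_incidence {n : ℕ} {G : SimpleGraph (Fin n)}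
    [DecidableRel G.Adj] (hG : G.Preconnected) {B : Matrix (EdgeIdx n) (Fin n) ℝ}
    (hB : IsPInv (incidence (G.adjMatrix ℝ)) B) (e : EdgeIdx n) (i : Fin n) : |B e i| ≤ 1 := by
  obtain ⟨⟨j, k⟩, hjk⟩ := e
  set e : EdgeIdx n := ⟨(j, k), hjk⟩
  set F := incidence (G.adjMatrix ℝ)
  by_cases hadj : G.Adj j k
  swap
  · rw [hB.apply_eq_zero_of_forall_apply_eq_zero fun a => by
      simp [F, incidence_adjMatrix_apply, e, hadj], abs_zero]
    exact zero_le_one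
  set w : Fin n → ℝ := fun a => B e a
  have hcol : ∀ a, F a e = (if a = j then 1 else 0) - (if a = k then 1 else 0) := fun a => by
    simp [F, incidence_adjMatrix_apply, e, hadj]
  have hLw : ∀ a, (G.lapMatrix ℝ *ᵥ w) a =
      (if a = j then 1 else 0) - (if a = k then 1 else 0) := by
    intro a
    rw [← hcol, ← incidence_adjMatrix_mul_transpose]
    conv_rhs => rw [← hB.mul_transpose_mul_transpose]
    rfl
  have hsum : ∑ a, w a = 0 := by
    simpa [mulVec, dotProduct] using
      congrFun (hB.mulVec_eq_zero_of_transpose_mulVec_eq_zero (transpose_incidence_mulVec_one _)) e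
  have hdiff : w j - w k = (B * F) e e := by
    simp [mul_apply, hcol, mul_sub, w]
  have hj : ∀ a, w a ≤ w j := hG.le_of_lapMatrix_mulVec_nonpos fun x hx => by
    rw [hLw]
    simp only [hx, if_false]
    split_ifs <;> norm_num
  have hk : ∀ a, w k ≤ w a := fun a => neg_le_neg_iff.1 <|
    hG.le_of_lapMatrix_mulVec_nonpos (f := -w) (j := k) (fun x hx => by
      rw [mulVec_neg, Pi.neg_apply, hLw]
      simp only [hx, if_false]
      split_ifs <;> norm_num) a
  calc |B e i| = |w i| := rfl
    _ ≤ w j - w k := abs_le_sub_of_sum_eq_zero hsum hj hk i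
    _ ≤ 1 := hdiff ▸ (hB.mul_apply_self_mem_Icc e).2

/-- `‖F†‖_max ≤ 1` for connected unweighted graphs. -/
theorem stmt9 (n : ℕ) (G : SimpleGraph (Fin n)) [DecidableRel G.Adj]
    (hconn : G.Connected)
    (B : Matrix (EdgeIdx n) (Fin n) ℝ)
    (hB : IsPInv (incidence (Matrix.of fun i j => if G.Adj i j then (1 : ℝ) else 0)) B) :
    (∀ e i, |B e i| ≤ 1) ∧ maxEntry B ≤ 1 := by
  have hentry : ∀ e i, |B e i| ≤ 1 := abs_apply_le_one_of_isPInv_incidence hconn.preconnected hB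
  exact ⟨hentry, Real.iSup_le (fun e => Real.iSup_le (hentry e) zero_le_one) zero_le_one⟩
end

section
/- Let X ∈ R^{n×p}, let γ ≥ 0, and let Φ be the symmetric adjacency matrix (nonnegative entries, zero diagonal) of a connected affinity graph on n nodes. Then the unique global minimizer Û of the convex clustering objective U ↦ γ Σ_{i<j} √Φ_ij ‖U_{i·} − U_{j·}‖₂ + (1/2)‖U − X‖_F² satisfies Σ_{i=1}^n Û_{iℓ} = Σ_{i=1}^n X_{iℓ} for every coordinate ℓ = 1,…,p; that is, the column sums (equivalently the grand mean of the fitted centroids) of Û coincide with those of X. -/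
open MeasureTheory ProbabilityTheory Filter Matrix
open scoped ENNReal NNReal BigOperators

/-
Every term of the penalty depends only on differences of rows, so translating all rows of `U`
by a common vector leaves it unchanged. Translating by the column means of the residual
`U - X` lowers the fidelity term by `(1/2) Σ_l (Σ_i (U - X)_{il})² / n`, so at a minimizer all
residual column sums vanish.
-/

open Finset

noncomputable def colMean {n p : ℕ} (M : Matrix (Fin n) (Fin p) ℝ) : Fin p → ℝ :=
  fun l => (∑ i, M i l) / n

lemma dist2_sub_sub {p : ℕ} (a b v : Fin p → ℝ) : dist2 (a - v) (b - v) = dist2 a b := by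
  simp only [dist2, Pi.sub_apply, sub_sub_sub_cancel_right]

lemma penaltySum_sub_row {n p : ℕ} (Φ : Matrix (Fin n) (Fin n) ℝ)
    (U : Matrix (Fin n) (Fin p) ℝ) (v : Fin p → ℝ) :
    penaltySum Φ (Matrix.of fun i => U i - v) = penaltySum Φ U :=
  sum_congr rfl fun _ _ => congrArg _ (dist2_sub_sub _ _ v)

lemma sum_sq_sub_mean {ι : Type*} [Fintype ι] (f : ι → ℝ) :
    ∑ i, (f i - (∑ j, f j) / Fintype.card ι) ^ 2 =
      ∑ i, f i ^ 2 - (∑ i, f i) ^ 2 / Fintype.card ι := by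
  simp only [sub_sq, sum_add_distrib, sum_sub_distrib, ← sum_mul, ← mul_sum, sum_const,
    card_univ, nsmul_eq_mul]
  rcases eq_or_ne (Fintype.card ι : ℝ) 0 with hc | hc
  · simp [hc]
  · field_simp
    ring

lemma ccObj_sub_colMean {n p : ℕ} (γ : ℝ) (Φ : Matrix (Fin n) (Fin n) ℝ)
    (X U : Matrix (Fin n) (Fin p) ℝ) :
    ccObj γ Φ X (Matrix.of fun i => U i - colMean (U - X)) =
      ccObj γ Φ X U - (1 / 2) * ∑ l, (∑ i, (U - X) i l) ^ 2 / n := by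
  have hfid : ∀ l, ∑ i, (U i l - colMean (U - X) l - X i l) ^ 2 =
      ∑ i, (U i l - X i l) ^ 2 - (∑ i, (U - X) i l) ^ 2 / n := by
    intro l
    simpa [colMean, sub_right_comm] using sum_sq_sub_mean fun i => (U - X) i l
  rw [ccObj, ccObj, penaltySum_sub_row, sum_comm]
  simp only [Matrix.of_apply, Pi.sub_apply, hfid, sum_sub_distrib]
  rw [sum_comm (f := fun i l => (U i l - X i l) ^ 2)]
  ring

theorem stmt15_general (n p : ℕ) (γ : ℝ)
    (X : Matrix (Fin n) (Fin p) ℝ) (Φ : Matrix (Fin n) (Fin n) ℝ)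
    (Uhat : Matrix (Fin n) (Fin p) ℝ)
    (hmin : ∀ V : Matrix (Fin n) (Fin p) ℝ, ccObj γ Φ X Uhat ≤ ccObj γ Φ X V) :
    ∀ l, ∑ i, Uhat i l = ∑ i, X i l := by
  intro l
  have hdrop := hmin (Matrix.of fun i => Uhat i - colMean (Uhat - X))
  rw [ccObj_sub_colMean] at hdrop
  have hzero : ∑ l, (∑ i, (Uhat - X) i l) ^ 2 / n = 0 :=
    le_antisymm (by linarith) (by positivity)
  rcases div_eq_zero_iff.1 ((sum_eq_zero_iff_of_nonneg fun _ _ => by positivity).1 hzero l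
    (mem_univ l)) with hsq | hn
  · simpa [sum_sub_distrib, sub_eq_zero] using hsq
  · obtain rfl : n = 0 := by exact_mod_cast hn
    simp

/-- the convex clustering minimizer preserves column sums of the
data. -/
theorem stmt15 (n p : ℕ) (γ : ℝ) (hγ : 0 ≤ γ)
    (X : Matrix (Fin n) (Fin p) ℝ) (Φ : Matrix (Fin n) (Fin n) ℝ)
    (hsym : Φᵀ = Φ) (hnn : ∀ i j, 0 ≤ Φ i j) (hdiag : ∀ i, Φ i i = 0)
    (hconn : (graphOf Φ).Connected)
    (Uhat : Matrix (Fin n) (Fin p) ℝ)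
    (hmin : ∀ V : Matrix (Fin n) (Fin p) ℝ, ccObj γ Φ X Uhat ≤ ccObj γ Φ X V) :
    ∀ l, ∑ i, Uhat i l = ∑ i, X i l :=
  stmt15_general n p γ X Φ Uhat hmin
end
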